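/- A nonempty normalized circuit never evaluates to a Clifford gate: for every nonempty normalized word n over {TH, SH} with evaluation matrix N, the matrix N · Z · N† is not equal to any of X, −X, Y, −Y, Z, −Z; consequently, N is not equal up to phase to any element of the Clifford group 𝒞. -/

import Mathlib

open Matrix Complex

noncomputable section

/-- The Hadamard gate. -/
noncomputable def Hm : Matrix (Fin 2) (Fin 2) ℂ :=
  (Complex.I / (Real.sqrt 2 : ℂ)) • !![1, 1; 1, -1]

/-- The T gate. -/
noncomputable def Tm : Matrix (Fin 2) (Fin 2) ℂ :=
  !![Complex.exp (-(Real.pi / 8 : ℂ) * Complex.I), 0;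
     0, Complex.exp ((Real.pi / 8 : ℂ) * Complex.I)]

/-- The phase gate `S = T²`. -/
noncomputable def Sm : Matrix (Fin 2) (Fin 2) ℂ := Tm * Tm

/-- `A` equals `B` up to a unit-modulus scalar (global phase). -/
def UpToPhase (A B : Matrix (Fin 2) (Fin 2) ℂ) : Prop :=
  ∃ z : ℂ, ‖z‖ = 1 ∧ A = z • B

/-- Evaluation of a word over the alphabet {H, S}. -/
noncomputable def evalHS (w : List Bool) : Matrix (Fin 2) (Fin 2) ℂ :=
  (w.map (fun b => if b then Hm else Sm)).prod

/-- The Clifford group 𝒞: unitaries equal up to phase to a product of copies of H and S. -/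
def Clifford (U : Matrix (Fin 2) (Fin 2) ℂ) : Prop :=
  U ∈ Matrix.unitaryGroup (Fin 2) ℂ ∧ ∃ w : List Bool, UpToPhase U (evalHS w)

/-- The syllables TH and SH. -/
inductive Syl : Type
  | TH : Syl
  | SH : Syl
deriving DecidableEq

/-- Evaluation of a syllable. -/
noncomputable def evalSyl : Syl → Matrix (Fin 2) (Fin 2) ℂ
  | Syl.TH => Tm * Hm
  | Syl.SH => Sm * Hm

/-- Evaluation of a word over {TH, SH}. -/
noncomputable def evalWord (w : List Syl) : Matrix (Fin 2) (Fin 2) ℂ :=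
  (w.map evalSyl).prod

/-- A word is normalized if it is empty, or it ends with TH and
contains no two consecutive SH syllables. -/
def Normalized (w : List Syl) : Prop :=
  w = [] ∨ (w.getLast? = some Syl.TH ∧ ¬ ([Syl.SH, Syl.SH] <:+: w))

/-- A canonical word: normalized and no SH among its first four syllables. -/
def Canonical (w : List Syl) : Prop :=
  Normalized w ∧ Syl.SH ∉ w.take 4

/-- The T-count of a word: the number of TH syllables. -/
def Tcount (w : List Syl) : ℕ := w.count Syl.TH

/-- Trace distance between two matrices. -/
noncomputable def udist (U V : Matrix (Fin 2) (Fin 2) ℂ) : ℝ :=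
  Real.sqrt ((2 - ‖(U * Vᴴ).trace‖) / 2)

/-- Pauli X. -/
def Xm : Matrix (Fin 2) (Fin 2) ℂ := !![0, 1; 1, 0]

/-- Pauli Y. -/
def Ym : Matrix (Fin 2) (Fin 2) ℂ := !![0, -Complex.I; Complex.I, 0]

/-- Pauli Z. -/
def Zm : Matrix (Fin 2) (Fin 2) ℂ := !![1, 0; 0, -1]

/-! ### Auxiliary machinery -/

noncomputable def Pm (x y z : ℝ) : Matrix (Fin 2) (Fin 2) ℂ :=
  !![(z:ℂ), x - y*Complex.I; x + y*Complex.I, -z]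

lemma csq : (Real.sqrt 2 : ℂ) ^ 2 = 2 := by
  norm_cast
  rw [Real.sq_sqrt]; norm_num

lemma cne : (Real.sqrt 2 : ℂ) ≠ 0 := by
  simp [Real.sqrt_eq_zero']

lemma rne : (Real.sqrt 2 : ℝ) ≠ 0 := by
  positivity

lemma rss : Real.sqrt 2 * Real.sqrt 2 = 2 := Real.mul_self_sqrt (by norm_num)

lemma cj1 : (starRingEnd ℂ) (Complex.exp (-((Real.pi:ℂ) / 8 * Complex.I))) = Complex.exp ((Real.pi:ℂ) / 8 * Complex.I) := by
  rw [← Complex.exp_conj]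
  congr 1
  simp [Complex.ext_iff, Complex.div_re, Complex.div_im]
  ring

lemma cj2 : (starRingEnd ℂ) (Complex.exp ((Real.pi:ℂ) / 8 * Complex.I)) = Complex.exp (-((Real.pi:ℂ) / 8 * Complex.I)) := by
  have := congrArg (starRingEnd ℂ) cj1
  simpa using this.symm

lemma m0 : Complex.exp ((Real.pi:ℂ)/8*Complex.I) * Complex.exp (-((Real.pi:ℂ)/8*Complex.I)) = 1 := by
  rw [← Complex.exp_add]; simp

lemma m0' : Complex.exp (-((Real.pi:ℂ)/8*Complex.I)) * Complex.exp ((Real.pi:ℂ)/8*Complex.I) = 1 := by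
  rw [mul_comm]; exact m0

lemma mTT : Complex.exp (-((Real.pi:ℂ)/8*Complex.I)) * Complex.exp (-((Real.pi:ℂ)/8*Complex.I))
    = (1 - Complex.I)/(Real.sqrt 2:ℂ) := by
  rw [← Complex.exp_add]
  have : (-((Real.pi:ℂ) / 8 * Complex.I) + -((Real.pi:ℂ) / 8 * Complex.I)) = (-(Real.pi/4:ℂ)) * Complex.I := by ring
  rw [this, Complex.exp_mul_I, Complex.cos_neg, Complex.sin_neg]
  have h4 : (Real.pi/4 : ℂ) = ((Real.pi/4 : ℝ) : ℂ) := by push_cast; ring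
  rw [h4, ← Complex.ofReal_cos, ← Complex.ofReal_sin, Real.cos_pi_div_four, Real.sin_pi_div_four]
  have h2 := cne
  field_simp
  ring_nf
  push_cast
  ring_nf
  rw [csq]
  ring

lemma mTT' : Complex.exp ((Real.pi:ℂ)/8*Complex.I) * Complex.exp ((Real.pi:ℂ)/8*Complex.I)
    = (1 + Complex.I)/(Real.sqrt 2:ℂ) := by
  have := congrArg (starRingEnd ℂ) mTT
  rw [_root_.map_mul, cj1, map_div₀, map_sub, _root_.map_one, Complex.conj_I, Complex.conj_ofReal] at this
  rw [this]; ring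

lemma Hconj (x y z : ℝ) : Hm * Pm x y z * Hmᴴ = Pm z (-y) x := by
  have h2 := cne
  ext i j
  fin_cases i <;> fin_cases j <;>
    simp [Hm, Pm, Matrix.mul_apply, Fin.sum_univ_two, Matrix.conjTranspose_apply, Complex.ext_iff,
      ← add_div, Complex.div_re, Complex.div_im] <;>
    field_simp <;> ring_nf <;> simp [Complex.ext_iff] <;> ring_nf <;> trivial

lemma Tconj (x y z : ℝ) : Tm * Pm x y z * Tmᴴ =
    Pm ((x - y)/Real.sqrt 2) ((x + y)/Real.sqrt 2) z := by
  have h2 := cne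
  ext i j
  fin_cases i <;> fin_cases j <;>
    simp [Tm, Pm, Matrix.mul_apply, Fin.sum_univ_two, Matrix.conjTranspose_apply]
  · rw [cj1, mul_right_comm, m0']
    ring
  · rw [cj2, mul_right_comm, mTT]
    field_simp
    ring_nf
    rw [Complex.I_sq]
    ring
  · rw [cj1, mul_right_comm, mTT']
    field_simp
    ring_nf
    rw [Complex.I_sq]
    ring
  · rw [cj2, mul_right_comm, m0]
    ring

lemma sandwich (A B M : Matrix (Fin 2) (Fin 2) ℂ) :
    (A * B) * M * (A * B)ᴴ = A * (B * M * Bᴴ) * Aᴴ := by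
  rw [Matrix.conjTranspose_mul]
  simp only [Matrix.mul_assoc]

lemma Pm_congr {x y z x' y' z' : ℝ} (hx : x = x') (hy : y = y') (hz : z = z') :
    Pm x y z = Pm x' y' z' := by rw [hx, hy, hz]

lemma Sconj (x y z : ℝ) : Sm * Pm x y z * Smᴴ = Pm (-y) x z := by
  rw [Sm, sandwich, Tconj, Tconj]
  apply Pm_congr
  · rw [div_sub_div_same, div_div, rss,
      show (x - y) - (x + y) = -y * 2 by ring, mul_div_assoc]
    simp
  · rw [← add_div, div_div, rss,
      show (x - y) + (x + y) = x * 2 by ring, mul_div_assoc]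
    simp
  · rfl

lemma THconj (x y z : ℝ) : (Tm * Hm) * Pm x y z * (Tm * Hm)ᴴ =
    Pm ((z + y)/Real.sqrt 2) ((z - y)/Real.sqrt 2) x := by
  rw [sandwich, Hconj, Tconj]
  apply Pm_congr <;> ring_nf

lemma SHconj (x y z : ℝ) : (Sm * Hm) * Pm x y z * (Sm * Hm)ᴴ = Pm y z x := by
  rw [sandwich, Hconj, Sconj]
  apply Pm_congr <;> ring_nf

/-! ### The integer state machine -/

abbrev St := (ℤ × ℤ) × (ℤ × ℤ) × (ℤ × ℤ)

def stepT (s : St) : St :=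
  ((s.2.2.1 + s.2.1.1, s.2.2.2 + s.2.1.2),
   (s.2.2.1 - s.2.1.1, s.2.2.2 - s.2.1.2),
   (2 * s.1.2, s.1.1))

def stepS (s : St) : St := (s.2.1, s.2.2, s.1)

def stepSyl : Syl → St → St
  | Syl.TH => stepT
  | Syl.SH => stepS

def stw (w : List Syl) : St := w.foldr stepSyl ((0,0),(0,0),(1,0))

noncomputable def toR (p : ℤ × ℤ) : ℝ := (p.1 : ℝ) + (p.2 : ℝ) * Real.sqrt 2

lemma toR_eq_zero {p : ℤ × ℤ} (h : toR p = 0) : p = (0,0) := by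
  by_cases h2 : p.2 = 0
  · unfold toR at h
    rw [h2] at h
    simp at h
    have : p.1 = 0 := by exact_mod_cast h
    exact Prod.ext this h2
  · exfalso
    have hq : Real.sqrt 2 = ((-p.1 / p.2 : ℚ) : ℝ) := by
      have hp2 : (p.2 : ℝ) ≠ 0 := Int.cast_ne_zero.mpr h2
      push_cast
      unfold toR at h
      field_simp
      linarith
    exact irrational_sqrt_two ⟨(-p.1 / p.2 : ℚ), hq.symm⟩

/-- Correspondence between matrices and the integer state machine. -/
lemma corr (w : List Syl) : evalWord w * Zm * (evalWord w)ᴴ =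
    Pm (toR (stw w).1 / Real.sqrt 2 ^ Tcount w)
       (toR (stw w).2.1 / Real.sqrt 2 ^ Tcount w)
       (toR (stw w).2.2 / Real.sqrt 2 ^ Tcount w) := by
  induction w with
  | nil =>
      simp [evalWord, stw, Tcount, toR]
      ext i j
      fin_cases i <;> fin_cases j <;> simp [Zm, Pm]
  | cons s t ih =>
      have hW : evalWord (s :: t) = evalSyl s * evalWord t := by
        simp [evalWord]
      rw [hW]
      cases s with
      | TH =>
          have hT : Tcount (Syl.TH :: t) = Tcount t + 1 := by
            simp [Tcount]
          have hS : stw (Syl.TH :: t) = stepT (stw t) := rfl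
          rw [show evalSyl Syl.TH = Tm * Hm from rfl]
          rw [show Tm * Hm * evalWord t * Zm * (Tm * Hm * evalWord t)ᴴ
              = (Tm * Hm) * (evalWord t * Zm * (evalWord t)ᴴ) * (Tm * Hm)ᴴ by
            rw [Matrix.conjTranspose_mul]
            simp only [Matrix.mul_assoc]]
          rw [ih, THconj, hT, hS]
          apply Pm_congr
          · show (toR (stw t).2.2 / Real.sqrt 2 ^ Tcount t + toR (stw t).2.1 / Real.sqrt 2 ^ Tcount t) / Real.sqrt 2
              = toR (stepT (stw t)).1 / Real.sqrt 2 ^ (Tcount t + 1)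
            unfold stepT toR
            push_cast
            rw [pow_succ]
            field_simp
            ring
          · show (toR (stw t).2.2 / Real.sqrt 2 ^ Tcount t - toR (stw t).2.1 / Real.sqrt 2 ^ Tcount t) / Real.sqrt 2
              = toR (stepT (stw t)).2.1 / Real.sqrt 2 ^ (Tcount t + 1)
            unfold stepT toR
            push_cast
            rw [pow_succ]
            field_simp
            ring
          · show toR (stw t).1 / Real.sqrt 2 ^ Tcount t
              = toR (stepT (stw t)).2.2 / Real.sqrt 2 ^ (Tcount t + 1)
            unfold stepT toR
            push_cast
            rw [pow_succ]
            rw [div_eq_div_iff (by positivity) (by positivity)]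
            ring_nf
            rw [Real.sq_sqrt (by norm_num : (0:ℝ) ≤ 2)]
            ring
      | SH =>
          have hT : Tcount (Syl.SH :: t) = Tcount t := by
            simp [Tcount]
          have hS : stw (Syl.SH :: t) = stepS (stw t) := rfl
          rw [show evalSyl Syl.SH = Sm * Hm from rfl]
          rw [show Sm * Hm * evalWord t * Zm * (Sm * Hm * evalWord t)ᴴ
              = (Sm * Hm) * (evalWord t * Zm * (evalWord t)ᴴ) * (Sm * Hm)ᴴ by
            rw [Matrix.conjTranspose_mul]
            simp only [Matrix.mul_assoc]]
          rw [ih, SHconj, hT, hS]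
          rfl

/-! ### Parity invariant -/

abbrev R2 := ZMod 2 × ZMod 2
abbrev R3 := R2 × R2 × R2

def r2 (p : ℤ × ℤ) : R2 := ((p.1 : ZMod 2), (p.2 : ZMod 2))

def rSt (s : St) : R3 := (r2 s.1, r2 s.2.1, r2 s.2.2)

def fT (r : R3) : R3 :=
  ((r.2.2.1 + r.2.1.1, r.2.2.2 + r.2.1.2),
   (r.2.2.1 - r.2.1.1, r.2.2.2 - r.2.1.2),
   (0, r.1.1))

def fS (r : R3) : R3 := (r.2.1, r.2.2, r.1)

lemma rT (s : St) : rSt (stepT s) = fT (rSt s) := by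
  unfold rSt stepT fT r2
  simp only [Prod.mk.injEq]
  refine ⟨⟨?_, ?_⟩, ⟨?_, ?_⟩, ?_, ?_⟩ <;> push_cast <;> ring_nf <;>
    simp [show ((2:ZMod 2)) = 0 from rfl]

lemma rS (s : St) : rSt (stepS s) = fS (rSt s) := rfl

def inA (r : R3) : Prop :=
  r = ((1,0),(1,0),(0,0)) ∨ r = ((1,0),(1,0),(0,1)) ∨ r = ((1,1),(1,1),(0,1))

def inB (r : R3) : Prop :=
  r = ((1,0),(0,0),(1,0)) ∨ r = ((1,0),(0,1),(1,0)) ∨ r = ((1,1),(0,1),(1,1))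

lemma closT (r : R3) (h : inA r ∨ inB r) : inA (fT r) := by
  rcases h with (h|h|h)|(h|h|h) <;> subst h <;> unfold inA fT <;> decide

lemma closS (r : R3) (h : inA r) : inB (fS r) := by
  rcases h with h|h|h <;> subst h <;> unfold inB fS <;> decide

lemma invariant : ∀ w : List Syl, Normalized w → w ≠ [] →
    (w.head? = some Syl.TH ∧ inA (rSt (stw w))) ∨
    (w.head? = some Syl.SH ∧ inB (rSt (stw w))) := by
  intro w
  induction w with
  | nil => intro _ h; exact absurd rfl h
  | cons s t ih =>
      intro hn _
      rcases hn with h | ⟨hL, hI⟩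
      · exact absurd h (by simp)
      cases t with
      | nil =>
          have hs : s = Syl.TH := by
            simpa using hL
          subst hs
          left
          constructor
          · rfl
          · show inA (rSt (stepT ((0,0),(0,0),(1,0))))
            rw [rT]
            unfold inA rSt r2 fT
            decide
      | cons r t' =>
          have hnt : Normalized (r :: t') := by
            right
            constructor
            · rwa [List.getLast?_cons_cons] at hL
            · intro hc
              exact hI (hc.trans (List.suffix_cons s (r::t')).isInfix)
          have iht := ih hnt (by simp)
          cases s with
          | TH =>
              left
              refine ⟨rfl, ?_⟩
              have : rSt (stw (Syl.TH :: r :: t')) = fT (rSt (stw (r :: t'))) := rT _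
              rw [this]
              apply closT
              rcases iht with ⟨_, h⟩ | ⟨_, h⟩
              · exact Or.inl h
              · exact Or.inr h
          | SH =>
              right
              refine ⟨rfl, ?_⟩
              have hr : r = Syl.TH := by
                cases r with
                | TH => rfl
                | SH =>
                    exfalso
                    exact hI ⟨[], t', rfl⟩
              subst hr
              rcases iht with ⟨_, h⟩ | ⟨hh, _⟩
              · have : rSt (stw (Syl.SH :: Syl.TH :: t')) = fS (rSt (stw (Syl.TH :: t'))) := rS _
                rw [this]
                exact closS _ h
              · exact Syl.noConfusion (Option.some.inj hh)

/-! ### Pauli matrices as Pm -/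

lemma XmP : Xm = Pm 1 0 0 := by
  ext i j; fin_cases i <;> fin_cases j <;> simp [Xm, Pm]

lemma nXmP : -Xm = Pm (-1) 0 0 := by
  ext i j; fin_cases i <;> fin_cases j <;> simp [Xm, Pm]

lemma YmP : Ym = Pm 0 1 0 := by
  ext i j; fin_cases i <;> fin_cases j <;> simp [Ym, Pm]

lemma nYmP : -Ym = Pm 0 (-1) 0 := by
  ext i j; fin_cases i <;> fin_cases j <;> simp [Ym, Pm]

lemma ZmP : Zm = Pm 0 0 1 := by
  ext i j; fin_cases i <;> fin_cases j <;> simp [Zm, Pm]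

lemma nZmP : -Zm = Pm 0 0 (-1) := by
  ext i j; fin_cases i <;> fin_cases j <;> simp [Zm, Pm]

lemma Pinj {x y z x' y' z' : ℝ} (h : Pm x y z = Pm x' y' z') : x = x' ∧ y = y' ∧ z = z' := by
  have h00 := congrFun (congrFun h 0) 0
  have h01 := congrFun (congrFun h 0) 1
  simp [Pm, Complex.ext_iff] at h00 h01
  exact ⟨h01.1, by linarith [h01.2], h00⟩

lemma powne (k : ℕ) : Real.sqrt 2 ^ k ≠ 0 := pow_ne_zero _ rne

lemma div_zero_toR {p : ℤ × ℤ} {k : ℕ} (h : toR p / Real.sqrt 2 ^ k = 0) : r2 p = (0,0) := by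
  have := (div_eq_zero_iff.mp h).resolve_right (powne k)
  rw [toR_eq_zero this]
  rfl

/-! ### Clifford words conjugate Z into the Pauli set -/

lemma SX : Sm * Xm * Smᴴ = Ym := by rw [XmP, YmP, Sconj]; norm_num
lemma SnX : Sm * -Xm * Smᴴ = -Ym := by rw [nXmP, nYmP, Sconj]; norm_num
lemma SY : Sm * Ym * Smᴴ = -Xm := by rw [nXmP, YmP, Sconj]
lemma SnY : Sm * -Ym * Smᴴ = Xm := by rw [nYmP, XmP, Sconj]; norm_num
lemma SZ : Sm * Zm * Smᴴ = Zm := by rw [ZmP, Sconj, neg_zero]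
lemma SnZ : Sm * -Zm * Smᴴ = -Zm := by rw [nZmP, Sconj, neg_zero]
lemma HX : Hm * Xm * Hmᴴ = Zm := by rw [XmP, ZmP, Hconj]; norm_num
lemma HnX : Hm * -Xm * Hmᴴ = -Zm := by rw [nXmP, nZmP, Hconj]; norm_num
lemma HY : Hm * Ym * Hmᴴ = -Ym := by rw [nYmP, YmP, Hconj]
lemma HnY : Hm * -Ym * Hmᴴ = Ym := by rw [nYmP, YmP, Hconj]; norm_num
lemma HZ : Hm * Zm * Hmᴴ = Xm := by rw [ZmP, XmP, Hconj]; norm_num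
lemma HnZ : Hm * -Zm * Hmᴴ = -Xm := by rw [nZmP, nXmP, Hconj]; norm_num

lemma HS_pauli (v : List Bool) :
    evalHS v * Zm * (evalHS v)ᴴ ∈ ({Xm, -Xm, Ym, -Ym, Zm, -Zm} : Set (Matrix (Fin 2) (Fin 2) ℂ)) := by
  induction v with
  | nil =>
      simp only [evalHS, List.map_nil, List.prod_nil, Matrix.one_mul, Matrix.conjTranspose_one,
        Matrix.mul_one]
      simp
  | cons b t ih =>
      simp only [Set.mem_insert_iff, Set.mem_singleton_iff] at ih ⊢
      cases b
      · have hsw : evalHS (false :: t) * Zm * (evalHS (false :: t))ᴴ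
            = Sm * (evalHS t * Zm * (evalHS t)ᴴ) * Smᴴ := by
          rw [show evalHS (false :: t) = Sm * evalHS t by simp [evalHS],
            Matrix.conjTranspose_mul]
          simp only [Matrix.mul_assoc]
        rw [hsw]
        rcases ih with h|h|h|h|h|h <;> rw [h]
        · rw [SX]; tauto
        · rw [SnX]; tauto
        · rw [SY]; tauto
        · rw [SnY]; tauto
        · rw [SZ]; tauto
        · rw [SnZ]; tauto
      · have hsw : evalHS (true :: t) * Zm * (evalHS (true :: t))ᴴ
            = Hm * (evalHS t * Zm * (evalHS t)ᴴ) * Hmᴴ := by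
          rw [show evalHS (true :: t) = Hm * evalHS t by simp [evalHS],
            Matrix.conjTranspose_mul]
          simp only [Matrix.mul_assoc]
        rw [hsw]
        rcases ih with h|h|h|h|h|h <;> rw [h]
        · rw [HX]; tauto
        · rw [HnX]; tauto
        · rw [HY]; tauto
        · rw [HnY]; tauto
        · rw [HZ]; tauto
        · rw [HnZ]; tauto

theorem normalized_not_clifford (n : List Syl) (hn : Normalized n) (hne : n ≠ []) :
    evalWord n * Zm * (evalWord n)ᴴ ∉
      ({Xm, -Xm, Ym, -Ym, Zm, -Zm} : Set (Matrix (Fin 2) (Fin 2) ℂ)) ∧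
    ∀ g : Matrix (Fin 2) (Fin 2) ℂ, Clifford g → ¬ UpToPhase (evalWord n) g := by
  have hAB : inA (rSt (stw n)) ∨ inB (rSt (stw n)) := by
    rcases invariant n hn hne with ⟨_, h⟩ | ⟨_, h⟩
    · exact Or.inl h
    · exact Or.inr h
  have key : evalWord n * Zm * (evalWord n)ᴴ ∉
      ({Xm, -Xm, Ym, -Ym, Zm, -Zm} : Set (Matrix (Fin 2) (Fin 2) ℂ)) := by
    intro hmem
    simp only [Set.mem_insert_iff, Set.mem_singleton_iff] at hmem
    rw [corr n] at hmem
    have h2z : (r2 (stw n).2.1 = (0,0) ∧ r2 (stw n).2.2 = (0,0)) ∨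
               (r2 (stw n).1 = (0,0) ∧ r2 (stw n).2.2 = (0,0)) ∨
               (r2 (stw n).1 = (0,0) ∧ r2 (stw n).2.1 = (0,0)) := by
      rcases hmem with h|h|h|h|h|h
      · rw [XmP] at h
        obtain ⟨_, hy, hz⟩ := Pinj h
        exact Or.inl ⟨div_zero_toR hy, div_zero_toR hz⟩
      · rw [nXmP] at h
        obtain ⟨_, hy, hz⟩ := Pinj h
        exact Or.inl ⟨div_zero_toR hy, div_zero_toR hz⟩
      · rw [YmP] at h
        obtain ⟨hx, _, hz⟩ := Pinj h
        exact Or.inr (Or.inl ⟨div_zero_toR hx, div_zero_toR hz⟩)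
      · rw [nYmP] at h
        obtain ⟨hx, _, hz⟩ := Pinj h
        exact Or.inr (Or.inl ⟨div_zero_toR hx, div_zero_toR hz⟩)
      · rw [ZmP] at h
        obtain ⟨hx, hy, _⟩ := Pinj h
        exact Or.inr (Or.inr ⟨div_zero_toR hx, div_zero_toR hy⟩)
      · rw [nZmP] at h
        obtain ⟨hx, hy, _⟩ := Pinj h
        exact Or.inr (Or.inr ⟨div_zero_toR hx, div_zero_toR hy⟩)
    rcases h2z with ⟨u, v⟩ | ⟨u, v⟩ | ⟨u, v⟩
    · rcases hAB with (h|h|h)|(h|h|h)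
      · exact absurd (u.symm.trans (congrArg (fun r : R3 => r.2.1) h)) (by decide)
      · exact absurd (u.symm.trans (congrArg (fun r : R3 => r.2.1) h)) (by decide)
      · exact absurd (u.symm.trans (congrArg (fun r : R3 => r.2.1) h)) (by decide)
      · exact absurd (v.symm.trans (congrArg (fun r : R3 => r.2.2) h)) (by decide)
      · exact absurd (v.symm.trans (congrArg (fun r : R3 => r.2.2) h)) (by decide)
      · exact absurd (v.symm.trans (congrArg (fun r : R3 => r.2.2) h)) (by decide)
    · rcases hAB with (h|h|h)|(h|h|h) <;>
        exact absurd (u.symm.trans (congrArg (fun r : R3 => r.1) h)) (by decide)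
    · rcases hAB with (h|h|h)|(h|h|h) <;>
        exact absurd (u.symm.trans (congrArg (fun r : R3 => r.1) h)) (by decide)
  refine ⟨key, ?_⟩
  rintro g ⟨_, v, z', hz', hg⟩ ⟨z, hz, hN⟩
  apply key
  have hEq : evalWord n = (z * z') • evalHS v := by
    rw [hN, hg, smul_smul]
  have habs : ‖z * z'‖ = 1 := by
    rw [norm_mul, hz, hz', mul_one]
  have hone : (z * z') * starRingEnd ℂ (z * z') = 1 := by
    rw [Complex.mul_conj]
    norm_cast
    rw [Complex.normSq_eq_norm_sq, habs]
    norm_num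
  have hNZN : evalWord n * Zm * (evalWord n)ᴴ = evalHS v * Zm * (evalHS v)ᴴ := by
    rw [hEq, Matrix.conjTranspose_smul]
    simp only [Matrix.smul_mul, Matrix.mul_smul, smul_smul]
    rw [show star (z * z') * (z * z') = 1 by rw [mul_comm]; exact hone, one_smul]
  rw [hNZN]
  exact HS_pauli v

end
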